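/- arXiv:1106.5088 — 6 statements merged into one kernel-verified Lean document; each statement's English description precedes it below -/
import Mathlib

section
/- In a push-out diagram obtained from a short exact sequence 0 → Y →i X → Z → 0 and an operator j : Y → E, the resulting lower exact sequence 0 → E → PO → Z → 0 splits if and only if j extends to X, i.e. there exists a bounded operator T : X → E with T ∘ i = j. -/
/-!
A retraction `p` of `v` yields the extension `p ∘ w`, because `w ∘ i = v ∘ j`. Conversely,
an extension `T` yields the retraction `[(e, x)] ↦ e + T x`, which is well defined because
`e + T x` vanishes on the generators `(j y, -i y)` of `Δ` and hence, being continuous, on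
their closure.
-/

section PushOut

variable {Y X E : Type} [NormedAddCommGroup Y] [NormedSpace ℝ Y]
  [NormedAddCommGroup X] [NormedSpace ℝ X]
  [NormedAddCommGroup E] [NormedSpace ℝ E]

/-- The diagonal subspace `Δ = closure {(j y, -i y) : y ∈ Y}` of `E × X`. -/
noncomputable def poDelta (i : Y →L[ℝ] X) (j : Y →L[ℝ] E) : Submodule ℝ (E × X) :=
  (LinearMap.range ((j.prod (-i) : Y →L[ℝ] E × X) : Y →ₗ[ℝ] E × X)).topologicalClosure

instance (i : Y →L[ℝ] X) (j : Y →L[ℝ] E) : IsClosed ((poDelta i j : Submodule ℝ (E × X)) : Set (E × X)) :=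
  Submodule.isClosed_topologicalClosure _

/-- The push-out `PO = (E × X)/Δ` of the operators `i : Y → X` and `j : Y → E`. -/
abbrev PushOut (i : Y →L[ℝ] X) (j : Y →L[ℝ] E) : Type :=
  (E × X) ⧸ poDelta i j

end PushOut

namespace PushOut

variable {Y X E F : Type} [NormedAddCommGroup Y] [NormedSpace ℝ Y]
  [NormedAddCommGroup X] [NormedSpace ℝ X]
  [NormedAddCommGroup E] [NormedSpace ℝ E]
  [NormedAddCommGroup F] [NormedSpace ℝ F]

noncomputable def inl (i : Y →L[ℝ] X) (j : Y →L[ℝ] E) : E →L[ℝ] PushOut i j :=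
  (poDelta i j).mkQL.comp (ContinuousLinearMap.inl ℝ E X)

noncomputable def inr (i : Y →L[ℝ] X) (j : Y →L[ℝ] E) : X →L[ℝ] PushOut i j :=
  (poDelta i j).mkQL.comp (ContinuousLinearMap.inr ℝ E X)

theorem inl_comp_eq_inr_comp (i : Y →L[ℝ] X) (j : Y →L[ℝ] E) :
    (inl i j).comp j = (inr i j).comp i := by
  ext y
  have hmem : (j y, -i y) ∈ poDelta i j := Submodule.le_topologicalClosure _ ⟨y, rfl⟩
  simpa [inl, inr, Submodule.Quotient.eq] using hmem

noncomputable def desc {i : Y →L[ℝ] X} {j : Y →L[ℝ] E} (a : E →L[ℝ] F) (b : X →L[ℝ] F)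
    (h : a.comp j = b.comp i) : PushOut i j →L[ℝ] F :=
  (poDelta i j).liftQL (a.coprod b) <| by
    refine Submodule.topologicalClosure_minimal _ ?_ (a.coprod b).isClosed_ker
    rintro _ ⟨y, rfl⟩
    simpa [add_neg_eq_zero] using congr($h y)

theorem desc_comp_inl {i : Y →L[ℝ] X} {j : Y →L[ℝ] E} (a : E →L[ℝ] F) (b : X →L[ℝ] F)
    (h : a.comp j = b.comp i) : (desc a b h).comp (inl i j) = a := by
  ext e
  change a.coprod b (e, 0) = a e
  simp

end PushOut

theorem stmt2_general
    {Y X E : Type} [NormedAddCommGroup Y] [NormedSpace ℝ Y]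
    [NormedAddCommGroup X] [NormedSpace ℝ X]
    [NormedAddCommGroup E] [NormedSpace ℝ E]
    (i : Y →L[ℝ] X)
    (j : Y →L[ℝ] E)
    (v : E →L[ℝ] PushOut i j)
    (hv : ∀ e : E, v e = Submodule.Quotient.mk (e, 0)) :
    (∃ p : PushOut i j →L[ℝ] E, p.comp v = ContinuousLinearMap.id ℝ E) ↔
      (∃ T : X →L[ℝ] E, T.comp i = j) := by
  obtain rfl : v = PushOut.inl i j := ContinuousLinearMap.ext hv
  constructor
  · rintro ⟨p, hp⟩
    refine ⟨p.comp (PushOut.inr i j), ?_⟩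
    rw [ContinuousLinearMap.comp_assoc, ← PushOut.inl_comp_eq_inr_comp,
      ← ContinuousLinearMap.comp_assoc, hp, ContinuousLinearMap.id_comp]
  · rintro ⟨T, hT⟩
    exact ⟨PushOut.desc _ T (by rw [ContinuousLinearMap.id_comp, hT]), PushOut.desc_comp_inl _ _ _⟩

/-- In a push-out diagram obtained from a short exact sequence `0 → Y →i X →q Z → 0`
and an operator `j : Y → E`, the lower exact sequence `0 → E →v PO → Z → 0` splits iff
`j` extends to `X` through `i`. -/
theorem stmt2
    {Y X Z E : Type} [NormedAddCommGroup Y] [NormedSpace ℝ Y] [CompleteSpace Y]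
    [NormedAddCommGroup X] [NormedSpace ℝ X] [CompleteSpace X]
    [NormedAddCommGroup Z] [NormedSpace ℝ Z] [CompleteSpace Z]
    [NormedAddCommGroup E] [NormedSpace ℝ E] [CompleteSpace E]
    (i : Y →L[ℝ] X) (q : X →L[ℝ] Z)
    (hi : Isometry i) (hq : Function.Surjective q)
    (hexact : LinearMap.ker (q : X →ₗ[ℝ] Z) = LinearMap.range (i : Y →ₗ[ℝ] X))
    (j : Y →L[ℝ] E)
    (v : E →L[ℝ] PushOut i j)
    (hv : ∀ e : E, v e = Submodule.Quotient.mk (e, 0)) :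
    (∃ p : PushOut i j →L[ℝ] E, p.comp v = ContinuousLinearMap.id ℝ E) ↔
      (∃ T : X →L[ℝ] E, T.comp i = j) :=
  stmt2_general i j v hv
end

section
/- If there is a bounded linear operator s : Y* → X* with i* ∘ s = id_{Y*} (i.e. the dual restriction map admits a bounded linear right inverse), then for every Banach space E every compact operator t : Y → E extends to a compact operator T : X → E with T ∘ i = t. -/
/-!
The extension is `t** ∘ s* ∘ j_X` in disguise. For `x : X`, the functional `f ↦ s (f ∘ t) x`
on `E*` is bounded above by the support function of the compact convex set `‖s‖ ‖x‖ • K`, where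
`K` is the closed convex hull of `t (B_Y)`; separating in the weak-* topology of `E**`, where the
only continuous functionals are evaluations at points of `E*`, shows that it is evaluation at a
point `T x` of that set. Then `T` is linear, maps the unit ball into the compact set `‖s‖ • K`,
and `T ∘ i = t` because `s` is a right inverse of `i*`.
-/

open NormedSpace Pointwise

theorem WeakDual.exists_eq_eval {𝕜 M : Type*} [NontriviallyNormedField 𝕜] [AddCommGroup M]
    [TopologicalSpace M] [Module 𝕜 M] (F : StrongDual 𝕜 (WeakDual 𝕜 M)) :
    ∃ x : M, ∀ φ : WeakDual 𝕜 M, F φ = φ x := by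
  obtain ⟨x, hx⟩ := LinearMap.dualEmbedding_surjective (topDualPairing 𝕜 M) F
  exact ⟨x, fun φ => by rw [← hx]; rfl⟩

instance WeakDual.instLocallyConvexSpace {M : Type*} [AddCommGroup M] [TopologicalSpace M]
    [Module ℝ M] : LocallyConvexSpace ℝ (WeakDual ℝ M) :=
  inferInstanceAs (LocallyConvexSpace ℝ (WeakBilin (topDualPairing ℝ M)))

theorem exists_mem_forall_eq_apply_of_le {E : Type*} [NormedAddCommGroup E] [NormedSpace ℝ E]
    {C : Set E} (hC : IsCompact C) (hCconv : Convex ℝ C) (ψ : StrongDual ℝ (StrongDual ℝ E))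
    (hψ : ∀ f : StrongDual ℝ E, ∃ c ∈ C, ψ f ≤ f c) :
    ∃ e ∈ C, ∀ f : StrongDual ℝ E, ψ f = f e := by
  let j : E → WeakDual ℝ (StrongDual ℝ E) := inclusionInDoubleDual ℝ E
  have hj : Continuous j := WeakDual.continuous_of_continuous_eval fun f => f.continuous
  have hjC : Convex ℝ (j '' C) := hCconv.is_linear_image (inclusionInDoubleDual ℝ E).isLinear
  by_contra! hψC
  have hψ_notMem : (ψ : WeakDual ℝ (StrongDual ℝ E)) ∉ j '' C := by
    rintro ⟨e, he, hje⟩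
    obtain ⟨f, hf⟩ := hψC e he
    exact hf (DFunLike.congr_fun hje f).symm
  obtain ⟨F, u, hFC, hFψ⟩ := geometric_hahn_banach_closed_point hjC
    (hC.image hj).isClosed hψ_notMem
  obtain ⟨f, hF⟩ := WeakDual.exists_eq_eval F
  obtain ⟨c, hc, hψc⟩ := hψ f
  have hfc : f c < u := (hF (j c)).symm.trans_lt (hFC (j c) ⟨c, hc, rfl⟩)
  have hψf : u < ψ f := hFψ.trans_eq (hF _)
  linarith

theorem TotallyBounded.isCompact_closedConvexHull {E : Type*} [AddCommGroup E] [Module ℝ E]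
    [UniformSpace E] [IsUniformAddGroup E] [LocallyConvexSpace ℝ E] [ContinuousSMul ℝ E]
    [CompleteSpace E] {s : Set E} (hs : TotallyBounded s) : IsCompact (closedConvexHull ℝ s) := by
  rw [closedConvexHull_eq_closure_convexHull]
  exact hs.convexHull.closure.isCompact_of_isClosed isClosed_closure

theorem exists_isCompactOperator_comp_eq_of_norm_le {X E : Type*} [NormedAddCommGroup X]
    [NormedSpace ℝ X] [NormedAddCommGroup E] [NormedSpace ℝ E]
    {D : Set E} (hD : IsCompact D) (hDconv : Convex ℝ D) (hD0 : (0 : E) ∈ D)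
    (Φ : StrongDual ℝ E →L[ℝ] StrongDual ℝ X) (hΦ : ∀ f, ∃ c ∈ D, ‖Φ f‖ ≤ f c) :
    ∃ T : X →L[ℝ] E, IsCompactOperator T ∧ ∀ f : StrongDual ℝ E, f.comp T = Φ f := by
  have hrep (x : X) : ∃ e ∈ ‖x‖ • D, ∀ f : StrongDual ℝ E, Φ f x = f e := by
    refine exists_mem_forall_eq_apply_of_le (hD.smul _) (hDconv.smul _)
      ((inclusionInDoubleDual ℝ X x).comp Φ) fun f => ?_
    obtain ⟨c, hc, hfc⟩ := hΦ f
    refine ⟨‖x‖ • c, Set.smul_mem_smul_set hc, ?_⟩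
    calc Φ f x ≤ ‖Φ f‖ * ‖x‖ := (le_abs_self _).trans ((Φ f).le_opNorm x)
      _ ≤ f c * ‖x‖ := by gcongr
      _ = f (‖x‖ • c) := by rw [map_smul, smul_eq_mul, mul_comm]
  choose T hTD hT using hrep
  let Tₗ : X →ₗ[ℝ] E :=
    { toFun := T
      map_add' := fun x y => (SeparatingDual.eq_iff_forall_dual_eq (R := ℝ)).2 fun f => by
        simp only [map_add, ← hT]
      map_smul' := fun a x => (SeparatingDual.eq_iff_forall_dual_eq (R := ℝ)).2 fun f => by
        simp only [map_smul, ← hT, RingHom.id_apply] }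
  have hTₗ : IsCompactOperator Tₗ := by
    refine (isCompactOperator_iff_image_ball_subset_compact Tₗ one_pos).2 ⟨D, hD, ?_⟩
    rintro _ ⟨x, hx, rfl⟩
    obtain ⟨d, hd, hdx⟩ := hTD x
    rw [mem_ball_zero_iff] at hx
    show T x ∈ D
    rw [← hdx]
    exact hDconv.smul_mem_of_zero_mem hD0 hd ⟨norm_nonneg x, hx.le⟩
  exact ⟨.mkOfIsCompactOperator hTₗ, hTₗ, fun f => ContinuousLinearMap.ext fun x => (hT x f).symm⟩

theorem exists_mem_norm_comp_le_of_image_closedBall_subset {Y E : Type*} [NormedAddCommGroup Y]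
    [NormedSpace ℝ Y] [NormedAddCommGroup E] [NormedSpace ℝ E] {t : Y →L[ℝ] E} {K : Set E}
    (hK : IsCompact K) (htK : t '' Metric.closedBall 0 1 ⊆ K) (f : StrongDual ℝ E) :
    ∃ c ∈ K, ‖f.comp t‖ ≤ f c := by
  have ht : ∀ y, ‖y‖ ≤ 1 → t y ∈ K := fun y hy => htK ⟨y, mem_closedBall_zero_iff.2 hy, rfl⟩
  obtain ⟨c, hc, hmax⟩ := hK.exists_isMaxOn ⟨t 0, ht 0 (by simp)⟩ f.continuous.continuousOn
  have hle : ∀ y, ‖y‖ ≤ 1 → f (t y) ≤ f c := fun y hy => hmax (ht y hy)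
  refine ⟨c, hc, ContinuousLinearMap.opNorm_le_of_unit_norm (by simpa using hle 0 (by simp))
    fun y hy => abs_le.2 ⟨?_, hle y hy.le⟩⟩
  exact neg_le.2 (by simpa using hle (-y) (by simp [hy]))

theorem IsCompactOperator.exists_isCompact_convex_norm_comp_le {Y E : Type*}
    [NormedAddCommGroup Y] [NormedSpace ℝ Y] [NormedAddCommGroup E] [NormedSpace ℝ E]
    [CompleteSpace E] {t : Y →L[ℝ] E} (ht : IsCompactOperator t) :
    ∃ K : Set E, IsCompact K ∧ Convex ℝ K ∧ (0 : E) ∈ K ∧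
      ∀ f : StrongDual ℝ E, ∃ c ∈ K, ‖f.comp t‖ ≤ f c := by
  have hK : IsCompact (closedConvexHull ℝ (t '' Metric.closedBall 0 1)) :=
    ((ht.isCompact_closure_image_closedBall 1).totallyBounded.subset
      subset_closure).isCompact_closedConvexHull
  refine ⟨_, hK, convex_closedConvexHull, subset_closedConvexHull ⟨0, by simp, map_zero t⟩,
    exists_mem_norm_comp_le_of_image_closedBall_subset hK subset_closedConvexHull⟩

theorem stmt5_general
    {Y X : Type} [NormedAddCommGroup Y] [NormedSpace ℝ Y]
    [NormedAddCommGroup X] [NormedSpace ℝ X]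
    (i : Y →L[ℝ] X)
    (s : StrongDual ℝ Y →L[ℝ] StrongDual ℝ X)
    (hs : ∀ g : StrongDual ℝ Y, (s g).comp i = g) :
    ∀ (E : Type) [NormedAddCommGroup E] [NormedSpace ℝ E] [CompleteSpace E],
      ∀ t : Y →L[ℝ] E, IsCompactOperator t →
        ∃ T : X →L[ℝ] E, IsCompactOperator T ∧ T.comp i = t := by
  intro E _ _ _ t ht
  obtain ⟨K, hK, hKconv, hK0, htK⟩ := ht.exists_isCompact_convex_norm_comp_le
  obtain ⟨T, hT, hTs⟩ := exists_isCompactOperator_comp_eq_of_norm_le (hK.smul ‖s‖)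
    (hKconv.smul ‖s‖) (Set.zero_mem_smul_set hK0)
    (s.comp ((ContinuousLinearMap.compL ℝ Y E ℝ).flip t)) fun f => by
      obtain ⟨c, hc, hfc⟩ := htK f
      refine ⟨‖s‖ • c, Set.smul_mem_smul_set hc, ?_⟩
      calc ‖s (f.comp t)‖ ≤ ‖s‖ * ‖f.comp t‖ := s.le_opNorm _
        _ ≤ ‖s‖ * f c := by gcongr
        _ = f (‖s‖ • c) := by rw [map_smul, smul_eq_mul]
  refine ⟨T, hT, ContinuousLinearMap.ext fun y =>
    (SeparatingDual.eq_iff_forall_dual_eq (R := ℝ)).2 fun f => ?_⟩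
  calc f (T (i y)) = s (f.comp t) (i y) := DFunLike.congr_fun (hTs f) (i y)
    _ = f (t y) := DFunLike.congr_fun (hs (f.comp t)) y

/-- If the dual restriction map `i* : X* → Y*` admits a bounded linear right inverse `s`
(`i* ∘ s = id`), then for every Banach space `E` every compact operator `t : Y → E`
extends through `i` to a compact operator `T : X → E`. -/
theorem stmt5
    {Y X Z : Type} [NormedAddCommGroup Y] [NormedSpace ℝ Y] [CompleteSpace Y]
    [NormedAddCommGroup X] [NormedSpace ℝ X] [CompleteSpace X]
    [NormedAddCommGroup Z] [NormedSpace ℝ Z] [CompleteSpace Z]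
    (i : Y →L[ℝ] X) (q : X →L[ℝ] Z)
    (hi : Isometry i) (hq : Function.Surjective q)
    (hexact : LinearMap.ker (q : X →ₗ[ℝ] Z) = LinearMap.range (i : Y →ₗ[ℝ] X))
    (s : StrongDual ℝ Y →L[ℝ] StrongDual ℝ X)
    (hs : ∀ g : StrongDual ℝ Y, (s g).comp i = g) :
    ∀ (E : Type) [NormedAddCommGroup E] [NormedSpace ℝ E] [CompleteSpace E],
      ∀ t : Y →L[ℝ] E, IsCompactOperator t →
        ∃ T : X →L[ℝ] E, IsCompactOperator T ∧ T.comp i = t :=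
  stmt5_general i s hs
end

section
/- Every bounded operator T : c₀ → Y that is weakly compact is compact. -/
/-!
Weak compactness forces `T` to send disjointly supported blocks `u p` of the unit ball of `c₀`
to vectors `y p = T (u p)` whose norms tend to zero. Otherwise take norming functionals `f p` of
the `y p`: since all signed sums of the blocks stay in the unit ball, the matrix `|f p (y i)|`
has bounded row sums, Rosenthal's lemma makes its off-diagonal part small on an infinite set `A`,
and then a weak cluster point of the partial sums of `(y i)_{i ∈ A}` and a weak-* cluster point
of `(f p)_{p ∈ A}` contradict each other. A gliding hump argument turns this into
`‖T ∘ P_{≥ N}‖ → 0`, where `P_{≥ N}` keeps the coordinates `≥ N`, so `T` is the norm limit of the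
finite rank operators `T ∘ P_{< N}`.
-/

open Metric ZeroAtInfty

/-- An operator is weakly compact if the image of the closed unit ball is relatively
compact in the weak topology. -/
def IsWeaklyCompactOperator {V X : Type*} [NormedAddCommGroup V] [NormedSpace ℝ V]
    [NormedAddCommGroup X] [NormedSpace ℝ X] (T : V →L[ℝ] X) : Prop :=
  IsCompact (closure ((toWeakSpace ℝ X) '' (T '' closedBall 0 1)))

open Filter Set Topology

lemma exists_subset_forall_exists_sum_gt {α : Type*} {m : α → α → ℝ} {ε : ℝ}
    (hbad : ∀ A : Set α, A.Infinite →
      ∃ p ∈ A, ∃ I : Finset α, ↑I ⊆ A \ {p} ∧ ε < ∑ i ∈ I, m p i)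
    {B : Set α} (hB : B.Infinite) :
    ∃ B' ⊆ B, B'.Infinite ∧ ∀ p ∈ B', ∃ I : Finset α, ↑I ⊆ B \ B' ∧ ε < ∑ i ∈ I, m p i := by
  -- split `B` into the infinitely many disjoint infinite pieces `range (g k)`
  let g : ℕ → ℕ → α := fun k n => hB.natEmbedding _ (Nat.pair k n)
  have hg : ∀ {k n k' n'}, g k n = g k' n' → k = k' ∧ n = n' := fun h =>
    Nat.pair_eq_pair.mp ((hB.natEmbedding _).injective (Subtype.ext h))
  have hgB : ∀ k n, g k n ∈ B := fun k n => (hB.natEmbedding _ _).2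
  choose p hp I hI hsum using fun k =>
    hbad (range (g k)) (infinite_range_of_injective fun _ _ h => (hg h).2)
  have hp_inj : Function.Injective p := fun k k' h => by
    obtain ⟨n, hn⟩ := hp k
    obtain ⟨n', hn'⟩ := hp k'
    exact (hg (hn.trans (h.trans hn'.symm))).1
  refine ⟨range p, ?_, infinite_range_of_injective hp_inj, ?_⟩
  · rintro _ ⟨k, rfl⟩
    obtain ⟨n, hn⟩ := hp k
    exact hn ▸ hgB k n
  · rintro _ ⟨k, rfl⟩
    refine ⟨I k, fun i hi => ?_, hsum k⟩
    obtain ⟨⟨n, rfl⟩, hne⟩ := hI k hi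
    refine ⟨hgB k n, ?_⟩
    rintro ⟨k', hk'⟩
    obtain ⟨n', hn'⟩ := hp k'
    obtain ⟨rfl, -⟩ := hg (hn'.trans hk')
    exact hne hk'.symm

/-- Rosenthal's disjointification lemma. -/
theorem exists_infinite_forall_sum_le {α : Type*} [Infinite α] {m : α → α → ℝ} {C : ℝ}
    (hC : ∀ p (I : Finset α), ∑ i ∈ I, m p i ≤ C) {ε : ℝ} (hε : 0 < ε) :
    ∃ A : Set α, A.Infinite ∧ ∀ p ∈ A, ∀ I : Finset α, ↑I ⊆ A \ {p} → ∑ i ∈ I, m p i ≤ ε := by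
  classical
  by_contra! hbad
  -- each application of `exists_subset_forall_exists_sum_gt` adds mass `ε` to every surviving
  -- row, which the row bound `C` forbids after more than `C / ε` steps
  have heavy : ∀ j : ℕ, ∃ B : Set α, B.Infinite ∧
      ∀ p ∈ B, ∃ I : Finset α, Disjoint (I : Set α) B ∧ j * ε ≤ ∑ i ∈ I, m p i := by
    intro j
    induction j with
    | zero => exact ⟨univ, infinite_univ, fun p _ => ⟨∅, by simp, by simp⟩⟩
    | succ j ih =>
      obtain ⟨B, hB, hIB⟩ := ih
      obtain ⟨B', hB'B, hB', hJB⟩ := exists_subset_forall_exists_sum_gt hbad hB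
      refine ⟨B', hB', fun p hp => ?_⟩
      obtain ⟨I, hI, hIsum⟩ := hIB p (hB'B hp)
      obtain ⟨J, hJ, hJsum⟩ := hJB p hp
      have hIJ : Disjoint I J := Finset.disjoint_coe.mp
        (hI.mono_right (hJ.trans sdiff_subset))
      refine ⟨I ∪ J, ?_, ?_⟩
      · rw [Finset.coe_union, disjoint_union_left]
        exact ⟨hI.mono_right hB'B, subset_sdiff.mp hJ |>.2⟩
      · rw [Finset.sum_union hIJ]
        push_cast
        linarith
  obtain ⟨j, hj⟩ := exists_nat_gt (C / ε)
  obtain ⟨B, hB, hIB⟩ := heavy j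
  obtain ⟨p, hp⟩ := hB.nonempty
  obtain ⟨I, -, hI⟩ := hIB p hp
  have := hC p I
  rw [div_lt_iff₀ hε] at hj
  linarith

section WeaklyCompact

variable {X : Type*} [NormedAddCommGroup X] [NormedSpace ℝ X]

lemma sum_abs_apply_le_of_forall_sum_smul_mem {y : ℕ → X} {K : Set X} {C : ℝ}
    (hKC : ∀ z ∈ K, ‖z‖ ≤ C)
    (hsum : ∀ (I : Finset ℕ) (δ : ℕ → ℝ), (∀ p, |δ p| ≤ 1) → ∑ p ∈ I, δ p • y p ∈ K)
    {f : StrongDual ℝ X} (hf : ‖f‖ ≤ 1) (I : Finset ℕ) :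
    ∑ i ∈ I, |f (y i)| ≤ C := by
  have hδ : ∀ i, |(SignType.sign (f (y i)) : ℝ)| ≤ 1 := fun i => by
    rcases SignType.trichotomy (SignType.sign (f (y i))) with h | h | h <;> simp [h]
  calc ∑ i ∈ I, |f (y i)| = f (∑ i ∈ I, (SignType.sign (f (y i)) : ℝ) • y i) := by
        simp [map_sum, sign_mul_self]
    _ ≤ ‖f‖ * ‖∑ i ∈ I, (SignType.sign (f (y i)) : ℝ) • y i‖ :=
        (Real.le_norm_self _).trans (f.le_opNorm _)
    _ ≤ 1 * C := mul_le_mul hf (hKC _ (hsum I _ hδ)) (norm_nonneg _) zero_le_one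
    _ = C := one_mul C

lemma continuous_apply_toWeakSpace_symm (g : StrongDual ℝ X) :
    Continuous fun z : WeakSpace ℝ X => g ((toWeakSpace ℝ X).symm z) :=
  WeakBilin.eval_continuous _ g

/-- With `x₀` a weak cluster point of the partial sums and `φ` a weak-* cluster point of
`(f p)_{p ∈ A}`, the diagonal bound gives `a - b ≤ φ x₀` and the off-diagonal one `|φ x₀| ≤ b`. -/
lemma exists_sum_range_filter_notMem {y : ℕ → X} {K : Set X}
    (hK : IsCompact (closure (toWeakSpace ℝ X '' K))) {f : ℕ → StrongDual ℝ X}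
    (hf : ∀ p, ‖f p‖ ≤ 1) {A : Set ℕ} [DecidablePred (· ∈ A)] (hA : A.Infinite) {a b : ℝ}
    (hdiag : ∀ p ∈ A, a ≤ f p (y p))
    (hoff : ∀ p ∈ A, ∀ I : Finset ℕ, ↑I ⊆ A \ {p} → |f p (∑ i ∈ I, y i)| ≤ b)
    (hab : 2 * b < a) :
    ∃ n, ∑ i ∈ (Finset.range n).filter (· ∈ A), y i ∉ K := by
  by_contra! hwK
  set S : ℕ → Finset ℕ := fun n => (Finset.range n).filter (· ∈ A)
  set w : ℕ → X := fun n => ∑ i ∈ S n, y i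
  obtain ⟨z, -, hz⟩ := hK.exists_mapClusterPt (f := atTop)
    (u := fun n => toWeakSpace ℝ X (w n))
    (tendsto_principal.mpr (Eventually.of_forall fun n =>
      subset_closure (mem_image_of_mem _ (hwK n))))
  have : (atTop ⊓ 𝓟 A).NeBot := frequently_mem_iff_neBot.mp
    (Nat.frequently_atTop_iff_infinite.mpr hA)
  obtain ⟨φ, -, hφ⟩ := (WeakDual.isCompact_closedBall (0 : StrongDual ℝ X) 1).exists_mapClusterPt
    (f := atTop ⊓ 𝓟 A) (u := fun p => StrongDual.toWeakDual (f p))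
    (tendsto_principal.mpr (Eventually.of_forall fun p => by simpa using hf p))
  set x₀ := (toWeakSpace ℝ X).symm z
  have hw_ge : ∀ p ∈ A, ∀ n > p, a - b ≤ f p (w n) := by
    intro p hp n hn
    have hpS : p ∈ S n := Finset.mem_filter.mpr ⟨Finset.mem_range.mpr hn, hp⟩
    have hrest := hoff p hp ((S n).erase p) fun i hi => by
      rw [Finset.mem_coe, Finset.mem_erase, Finset.mem_filter] at hi
      exact ⟨hi.2.2, hi.1⟩
    simp only [w, ← Finset.add_sum_erase _ _ hpS, map_add]
    linarith [abs_le.mp hrest, hdiag p hp]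
  have hφw : ∀ n, |φ (w n)| ≤ b := fun n => by
    refine (isClosed_le continuous_abs continuous_const).mem_of_mapClusterPt
      (hφ.continuousAt_comp (WeakDual.eval_continuous (w n)).continuousAt) ?_
    filter_upwards [mem_inf_of_left (eventually_ge_atTop n),
      mem_inf_of_right (mem_principal_self A)] with p hpn hpA
    refine hoff p hpA (S n) fun i hi => ?_
    rw [Finset.mem_coe, Finset.mem_filter, Finset.mem_range] at hi
    exact ⟨hi.2, fun h => by rw [mem_singleton_iff] at h; omega⟩
  have hx₀_ge : ∀ p ∈ A, a - b ≤ f p x₀ := fun p hp =>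
    isClosed_Ici.mem_of_mapClusterPt
      (hz.continuousAt_comp (continuous_apply_toWeakSpace_symm (f p)).continuousAt)
      ((eventually_gt_atTop p).mono (hw_ge p hp))
  have hφ_ge : a - b ≤ φ x₀ :=
    isClosed_Ici.mem_of_mapClusterPt
      (hφ.continuousAt_comp (WeakDual.eval_continuous x₀).continuousAt)
      (mem_of_superset (mem_inf_of_right (mem_principal_self A)) hx₀_ge)
  have hφ_le : |φ x₀| ≤ b :=
    (isClosed_le continuous_abs continuous_const).mem_of_mapClusterPt
      (hz.continuousAt_comp
        (continuous_apply_toWeakSpace_symm (WeakDual.toStrongDual φ)).continuousAt)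
      (Eventually.of_forall hφw)
  linarith [abs_le.mp hφ_le]

lemma exists_norm_le_of_isCompact_closure_toWeakSpace {y : ℕ → X} {K : Set X} {C : ℝ}
    (hK : IsCompact (closure (toWeakSpace ℝ X '' K))) (hKC : ∀ z ∈ K, ‖z‖ ≤ C)
    (hsum : ∀ (I : Finset ℕ) (δ : ℕ → ℝ), (∀ p, |δ p| ≤ 1) → ∑ p ∈ I, δ p • y p ∈ K)
    {ε : ℝ} (hε : 0 < ε) : ∃ p, ‖y p‖ ≤ ε := by
  classical
  by_contra! hbig
  choose f hf hfy using fun p => exists_dual_vector'' ℝ (y p)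
  obtain ⟨A, hA, hAsmall⟩ := exists_infinite_forall_sum_le
    (fun p I => sum_abs_apply_le_of_forall_sum_smul_mem hKC hsum (hf p) I)
    (by positivity : 0 < ε / 4)
  obtain ⟨n, hn⟩ := exists_sum_range_filter_notMem (y := y) hK hf hA (a := ε)
    (fun p _ => by simpa [hfy] using (hbig p).le)
    (fun p hp I hI => by
      rw [map_sum]
      exact (Finset.abs_sum_le_sum_abs _ _).trans (hAsmall p hp I hI))
    (by linarith)
  exact hn (by simpa using hsum _ 1 (by simp))

end WeaklyCompact

namespace ZeroAtInftyContinuousMap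

section Norm

variable {α β : Type*} [TopologicalSpace α] [SeminormedAddCommGroup β]

lemma norm_apply_le (f : C₀(α, β)) (x : α) : ‖f x‖ ≤ ‖f‖ := by
  rw [← norm_toBCF_eq_norm]
  exact f.toBCF.norm_coe_le_norm x

lemma norm_le {f : C₀(α, β)} {C : ℝ} (hC : 0 ≤ C) : ‖f‖ ≤ C ↔ ∀ x, ‖f x‖ ≤ C := by
  rw [← norm_toBCF_eq_norm]
  exact BoundedContinuousFunction.norm_le hC

end Norm

noncomputable def indicatorCLM (s : Set ℕ) : C₀(ℕ, ℝ) →L[ℝ] C₀(ℕ, ℝ) :=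
  LinearMap.mkContinuous
    { toFun := fun x =>
        { toFun := s.indicator x
          continuous_toFun := continuous_of_discreteTopology
          zero_at_infty' := squeeze_zero_norm (fun _ => norm_indicator_le_norm_self _ _)
            (by simpa using x.zero_at_infty'.norm) }
      map_add' := fun x y => by ext k; by_cases hk : k ∈ s <;> simp [hk]
      map_smul' := fun c x => by ext k; by_cases hk : k ∈ s <;> simp [hk] }
    1 fun x => by
      rw [one_mul, norm_le (norm_nonneg x)]
      exact fun k => (norm_indicator_le_norm_self _ _).trans (x.norm_apply_le k)

@[simp] lemma coe_indicatorCLM (s : Set ℕ) (x : C₀(ℕ, ℝ)) :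
    ⇑(indicatorCLM s x) = s.indicator x := rfl

lemma norm_indicatorCLM_le (s : Set ℕ) : ‖indicatorCLM s‖ ≤ 1 :=
  LinearMap.mkContinuous_norm_le _ zero_le_one _

lemma indicatorCLM_indicatorCLM (s t : Set ℕ) (x : C₀(ℕ, ℝ)) :
    indicatorCLM s (indicatorCLM t x) = indicatorCLM (s ∩ t) x := by
  ext k
  simp [indicator_indicator]

lemma indicatorCLM_add_indicatorCLM_compl (s : Set ℕ) (x : C₀(ℕ, ℝ)) :
    indicatorCLM s x + indicatorCLM sᶜ x = x := by
  ext k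
  simp [indicator_self_add_compl_apply]

lemma tendsto_indicatorCLM_Iio (x : C₀(ℕ, ℝ)) :
    Tendsto (fun n => indicatorCLM (Iio n) x) atTop (𝓝 x) := by
  have hx : Tendsto (fun k => ‖x k‖) atTop (𝓝 0) := by
    simpa [cocompact_eq_atTop] using x.zero_at_infty'.norm
  refine Metric.tendsto_atTop.mpr fun δ hδ => ?_
  obtain ⟨N, hN⟩ := eventually_atTop.mp (hx.eventually (gt_mem_nhds (half_pos hδ)))
  refine ⟨N, fun n hn => ?_⟩
  rw [dist_eq_norm]
  refine lt_of_le_of_lt ((norm_le (half_pos hδ).le).mpr fun k => ?_) (half_lt_self hδ)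
  by_cases hk : k < n
  · simp [hk, (half_pos hδ).le]
  · simpa [hk] using (hN k (by omega)).le

lemma isCompactOperator_indicatorCLM_Iio (N : ℕ) : IsCompactOperator (indicatorCLM (Iio N)) := by
  let P := indicatorCLM (Iio N)
  let V := LinearMap.range (P : C₀(ℕ, ℝ) →ₗ[ℝ] C₀(ℕ, ℝ))
  let R : V →ₗ[ℝ] (Fin N → ℝ) :=
    { toFun := fun v k => (v : C₀(ℕ, ℝ)) k
      map_add' := fun _ _ => rfl
      map_smul' := fun _ _ => rfl }
  have hR : Function.Injective R := by
    rintro ⟨_, x, rfl⟩ ⟨_, x', rfl⟩ hv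
    refine Subtype.ext (ext fun k => ?_)
    by_cases hk : k < N
    · exact congrFun hv ⟨k, hk⟩
    · simp [P, hk]
  have : FiniteDimensional ℝ V := Module.Finite.of_injective R hR
  exact (isCompactOperator_of_locallyCompactSpace_dom
    (P.codRestrict V fun x => LinearMap.mem_range_self _ x)).clm_comp V.subtypeL

@[simp] lemma finsetSum_apply {α ι E : Type*} [TopologicalSpace α] [NormedAddCommGroup E]
    (s : Finset ι) (f : ι → C₀(α, E)) (x : α) : (∑ i ∈ s, f i) x = ∑ i ∈ s, f i x :=
  map_sum (AddMonoidHom.mk' (fun g : C₀(α, E) => g x) fun _ _ => rfl) f s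

lemma norm_sum_smul_le_one {α ι E : Type*} [TopologicalSpace α] [NormedAddCommGroup E]
    [NormedSpace ℝ E] {u : ι → C₀(α, E)} (hu : ∀ p, ‖u p‖ ≤ 1)
    (hdisj : Pairwise fun p q => ∀ k, u p k = 0 ∨ u q k = 0)
    (I : Finset ι) {δ : ι → ℝ} (hδ : ∀ p, |δ p| ≤ 1) : ‖∑ p ∈ I, δ p • u p‖ ≤ 1 := by
  refine (norm_le zero_le_one).mpr fun k => ?_
  rw [finsetSum_apply]
  by_cases h : ∃ p ∈ I, u p k ≠ 0
  · obtain ⟨p, hp, hpk⟩ := h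
    rw [Finset.sum_eq_single_of_mem p hp fun q _ hqp => by
      simp [(hdisj hqp k).resolve_right hpk]]
    rw [smul_apply, norm_smul, Real.norm_eq_abs]
    exact mul_le_one₀ (hδ p) (norm_nonneg _) ((u p).norm_apply_le k |>.trans (hu p))
  · push Not at h
    rw [Finset.sum_eq_zero fun p hp => by simp [h p hp]]
    simp

lemma indicatorCLM_Ico_apply_eq_zero_or {n : ℕ → ℕ} (hn : Monotone n) (x : ℕ → C₀(ℕ, ℝ)) :
    Pairwise fun p q => ∀ k, indicatorCLM (Ico (n p) (n (p + 1))) (x p) k = 0 ∨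
      indicatorCLM (Ico (n q) (n (q + 1))) (x q) k = 0 := by
  suffices h : ∀ p q, p < q → ∀ k, k ∉ Ico (n p) (n (p + 1)) ∨ k ∉ Ico (n q) (n (q + 1)) by
    intro p q hpq k
    rcases hpq.lt_or_gt with hpq | hpq
    · exact (h p q hpq k).imp (fun hk => by simp [hk]) (fun hk => by simp [hk])
    · exact (h q p hpq k).symm.imp (fun hk => by simp [hk]) (fun hk => by simp [hk])
  intro p q hpq k
  have := hn (show p + 1 ≤ q from hpq)
  by_contra! h
  simp only [mem_Ico] at h
  omega

lemma comp_indicatorCLM_Iio_sub {Y : Type*} [NormedAddCommGroup Y] [NormedSpace ℝ Y]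
    (T : C₀(ℕ, ℝ) →L[ℝ] Y) (N : ℕ) :
    T ∘L indicatorCLM (Iio N) - T = -(T ∘L indicatorCLM (Ici N)) := by
  ext x : 1
  have hx := congrArg T (indicatorCLM_add_indicatorCLM_compl (Iio N) x)
  rw [map_add, compl_Iio] at hx
  simp only [_root_.sub_apply, ContinuousLinearMap.comp_apply, _root_.neg_apply]
  rw [← hx]
  abel

lemma exists_lt_norm_indicatorCLM_Ico {Y : Type*} [NormedAddCommGroup Y] [NormedSpace ℝ Y]
    {T : C₀(ℕ, ℝ) →L[ℝ] Y} {ε : ℝ} {N : ℕ} (hε : ε < ‖T ∘L indicatorCLM (Ici N)‖) :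
    ∃ M > N, ∃ x : C₀(ℕ, ℝ), ‖x‖ ≤ 1 ∧ ε < ‖T (indicatorCLM (Ico N M) x)‖ := by
  obtain ⟨x, hx, hTx⟩ := (T ∘L indicatorCLM (Ici N)).exists_lt_apply_of_lt_opNorm hε
  have hIco : ∀ M, indicatorCLM (Ico N M) x = indicatorCLM (Iio M) (indicatorCLM (Ici N) x) :=
    fun M => by rw [indicatorCLM_indicatorCLM, Iio_inter_Ici]
  have hlim : Tendsto (fun M => ‖T (indicatorCLM (Ico N M) x)‖) atTop
      (𝓝 ‖T (indicatorCLM (Ici N) x)‖) := by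
    simp only [hIco]
    exact ((T.continuous.tendsto _).comp (tendsto_indicatorCLM_Iio _)).norm
  obtain ⟨M, hMx, hM⟩ := ((hlim.eventually (lt_mem_nhds hTx)).and (eventually_gt_atTop N)).exists
  exact ⟨M, hM, x, hx.le, hMx⟩

end ZeroAtInftyContinuousMap

namespace IsWeaklyCompactOperator

open ZeroAtInftyContinuousMap

variable {Y : Type*} [NormedAddCommGroup Y] [NormedSpace ℝ Y] {T : C₀(ℕ, ℝ) →L[ℝ] Y}

lemma exists_norm_comp_indicatorCLM_Ici_le (hT : IsWeaklyCompactOperator T) {ε : ℝ}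
    (hε : 0 < ε) : ∃ N, ‖T ∘L indicatorCLM (Ici N)‖ ≤ ε := by
  by_contra! hbig
  choose M hM x hx hTx using fun N => exists_lt_norm_indicatorCLM_Ico (hbig N)
  -- the gliding hump: consecutive blocks `[n p, n (p + 1))` with `n (p + 1) = M (n p)`
  let n : ℕ → ℕ := fun p => Nat.rec 0 (fun _ => M) p
  let u : ℕ → C₀(ℕ, ℝ) := fun p => indicatorCLM (Ico (n p) (n (p + 1))) (x (n p))
  have hu : ∀ p, ‖u p‖ ≤ 1 := fun p =>
    ((indicatorCLM _).le_of_opNorm_le (norm_indicatorCLM_le _) _).trans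
      (by rw [one_mul]; exact hx (n p))
  have hdisj := indicatorCLM_Ico_apply_eq_zero_or
    (monotone_nat_of_le_succ fun p => (hM (n p)).le) (x ∘ n)
  obtain ⟨p, hp⟩ := exists_norm_le_of_isCompact_closure_toWeakSpace (y := fun p => T (u p))
    (K := T '' closedBall 0 1) hT
    (by rintro _ ⟨v, hv, rfl⟩; simpa using T.le_opNorm_of_le (mem_closedBall_zero_iff.mp hv))
    (fun I δ hδ => ⟨∑ p ∈ I, δ p • u p,
      mem_closedBall_zero_iff.mpr (norm_sum_smul_le_one hu hdisj I hδ), by simp⟩) hε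
  exact (hTx (n p)).not_ge hp

lemma tendsto_norm_comp_indicatorCLM_Ici (hT : IsWeaklyCompactOperator T) :
    Tendsto (fun N => ‖T ∘L indicatorCLM (Ici N)‖) atTop (𝓝 0) := by
  refine tendsto_order.2 ⟨fun a ha => Eventually.of_forall fun _ =>
    ha.trans_le (ContinuousLinearMap.opNorm_nonneg _), fun ε hε => ?_⟩
  obtain ⟨N, hN⟩ := hT.exists_norm_comp_indicatorCLM_Ici_le (half_pos hε)
  filter_upwards [eventually_ge_atTop N] with n hn
  have hcomp : T ∘L indicatorCLM (Ici n) =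
      (T ∘L indicatorCLM (Ici N)) ∘L indicatorCLM (Ici n) := by
    ext x : 1
    simp [indicatorCLM_indicatorCLM, Ici_inter_Ici, max_eq_right hn]
  rw [hcomp]
  calc ‖(T ∘L indicatorCLM (Ici N)) ∘L indicatorCLM (Ici n)‖
      ≤ ‖T ∘L indicatorCLM (Ici N)‖ * ‖indicatorCLM (Ici n)‖ :=
        ContinuousLinearMap.opNorm_comp_le _ _
    _ ≤ ε / 2 * 1 := mul_le_mul hN (norm_indicatorCLM_le _)
        (ContinuousLinearMap.opNorm_nonneg _) (half_pos hε).le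
    _ < ε := by linarith

end IsWeaklyCompactOperator

/-- Every weakly compact operator `T : c₀ → Y` is compact. -/
theorem stmt12
    {Y : Type} [NormedAddCommGroup Y] [NormedSpace ℝ Y] [CompleteSpace Y]
    (T : C₀(ℕ, ℝ) →L[ℝ] Y) (hT : IsWeaklyCompactOperator T) :
    IsCompactOperator T := by
  refine isCompactOperator_of_tendsto (l := atTop)
    (F := fun N => T ∘L ZeroAtInftyContinuousMap.indicatorCLM (Iio N)) ?_
    (.of_forall fun N => (ZeroAtInftyContinuousMap.isCompactOperator_indicatorCLM_Iio N).clm_comp T)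
  rw [tendsto_iff_norm_sub_tendsto_zero]
  simpa [ZeroAtInftyContinuousMap.comp_indicatorCLM_Iio_sub] using
    hT.tendsto_norm_comp_indicatorCLM_Ici
end

section
/- If a short exact sequence 0 → Y → X →q Z → 0 of Banach spaces admits, for every Banach space V, a lifting of every finite-rank operator t : V → Z to a finite-rank operator T : V → X with q ∘ T = t and ‖T‖ ≤ λ‖t‖ (uniform 𝔉-lifting), then for every Banach space V every approximable operator t : V → Z lifts to an approximable operator T : V → X with q ∘ T = t. -/
/-!
Composition with `q` is a bounded additive map from the complete space of operators `V → X` to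
the operators `V → Z`, and uniform `𝔉`-lifting gives every finite-rank operator into `Z` a
finite-rank preimage of controlled norm. Writing an approximable `t` as a fast-converging series
of finite-rank operators, lifting each term with norm control and summing the lifts in the
complete space yields a preimage in the closure of the finite-rank operators
(`controlled_closure_of_complete`).
-/

/-- A bounded operator has finite rank if its range is finite dimensional. -/
def IsFiniteRankOperator {V Z : Type*} [NormedAddCommGroup V] [NormedSpace ℝ V]
    [NormedAddCommGroup Z] [NormedSpace ℝ Z] (T : V →L[ℝ] Z) : Prop :=
  FiniteDimensional ℝ (LinearMap.range (T : V →ₗ[ℝ] Z))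

/-- A bounded operator is approximable if it is an operator-norm limit of finite-rank
operators. -/
def IsApproximableOperator {V Z : Type*} [NormedAddCommGroup V] [NormedSpace ℝ V]
    [NormedAddCommGroup Z] [NormedSpace ℝ Z] (T : V →L[ℝ] Z) : Prop :=
  ∀ ε > (0:ℝ), ∃ F : V →L[ℝ] Z, IsFiniteRankOperator F ∧ ‖T - F‖ < ε

theorem NormedAddGroupHom.exists_preimage_mem_closure_of_controlled
    {E F : Type*} [NormedAddCommGroup E] [CompleteSpace E] [NormedAddCommGroup F]
    (φ : NormedAddGroupHom E F) {K : AddSubgroup E} {L : AddSubgroup F} {C : ℝ} (hC : 0 < C)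
    (hφ : ∀ y ∈ L, ∃ x ∈ K, φ x = y ∧ ‖x‖ ≤ C * ‖y‖) {y : F} (hy : y ∈ closure (L : Set F)) :
    ∃ x ∈ closure (K : Set E), φ x = y := by
  have : CompleteSpace K.topologicalClosure := K.isClosed_topologicalClosure.completeSpace_coe
  have hφK : (φ.comp (NormedAddGroupHom.incl _)).SurjectiveOnWith L C := fun y hy ↦ by
    obtain ⟨x, hxK, hxy, hx⟩ := hφ y hy
    exact ⟨⟨x, K.le_topologicalClosure hxK⟩, hxy, hx⟩
  obtain ⟨⟨x, hx⟩, hxy, -⟩ := controlled_closure_of_complete hC one_pos hφK y hy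
  exact ⟨x, hx, hxy⟩

section FiniteRank

variable (V Z : Type*) [NormedAddCommGroup V] [NormedSpace ℝ V]
    [NormedAddCommGroup Z] [NormedSpace ℝ Z]

def finiteRankOperators : AddSubgroup (V →L[ℝ] Z) where
  carrier := {T | IsFiniteRankOperator T}
  zero_mem' := by
    change FiniteDimensional ℝ (LinearMap.range (0 : V →ₗ[ℝ] Z))
    rw [LinearMap.range_zero]
    infer_instance
  add_mem' {S T} (hS : FiniteDimensional ℝ _) (hT : FiniteDimensional ℝ _) :=
    Submodule.finiteDimensional_of_le (LinearMap.range_add_le (S : V →ₗ[ℝ] Z) T)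
  neg_mem' {T} (hT : FiniteDimensional ℝ _) := by
    change FiniteDimensional ℝ (LinearMap.range (-(T : V →ₗ[ℝ] Z)))
    rwa [LinearMap.range_neg]

variable {V Z}

theorem isApproximableOperator_iff_mem_closure {T : V →L[ℝ] Z} :
    IsApproximableOperator T ↔ T ∈ closure (finiteRankOperators V Z : Set (V →L[ℝ] Z)) := by
  simp only [Metric.mem_closure_iff, dist_eq_norm]
  rfl

end FiniteRank

theorem exists_isApproximableOperator_comp_eq
    {V X Z : Type*} [NormedAddCommGroup V] [NormedSpace ℝ V]
    [NormedAddCommGroup X] [NormedSpace ℝ X] [CompleteSpace X]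
    [NormedAddCommGroup Z] [NormedSpace ℝ Z] (q : X →L[ℝ] Z) {lam : ℝ} (hlam : 0 < lam)
    (hlift : ∀ t : V →L[ℝ] Z, IsFiniteRankOperator t →
        ∃ T : V →L[ℝ] X, IsFiniteRankOperator T ∧ q.comp T = t ∧ ‖T‖ ≤ lam * ‖t‖)
    {t : V →L[ℝ] Z} (ht : IsApproximableOperator t) :
    ∃ T : V →L[ℝ] X, IsApproximableOperator T ∧ q.comp T = t := by
  let compQ := ContinuousLinearMap.compL ℝ V X Z q
  let φ := compQ.toLinearMap.toAddMonoidHom.mkNormedAddGroupHom ‖compQ‖ compQ.le_opNorm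
  simp only [isApproximableOperator_iff_mem_closure] at ht ⊢
  exact φ.exists_preimage_mem_closure_of_controlled hlam hlift ht

theorem stmt15_general
    {X Z : Type} [NormedAddCommGroup X] [NormedSpace ℝ X] [CompleteSpace X]
    [NormedAddCommGroup Z] [NormedSpace ℝ Z]
    (q : X →L[ℝ] Z)
    (lam : ℝ) (hlam : 0 < lam)
    (hlift : ∀ (V : Type) [NormedAddCommGroup V] [NormedSpace ℝ V] [CompleteSpace V],
      ∀ t : V →L[ℝ] Z, IsFiniteRankOperator t →
        ∃ T : V →L[ℝ] X, IsFiniteRankOperator T ∧ q.comp T = t ∧ ‖T‖ ≤ lam * ‖t‖) :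
    ∀ (V : Type) [NormedAddCommGroup V] [NormedSpace ℝ V] [CompleteSpace V],
      ∀ t : V →L[ℝ] Z, IsApproximableOperator t →
        ∃ T : V →L[ℝ] X, IsApproximableOperator T ∧ q.comp T = t :=
  fun V _ _ _ _ ht ↦ exists_isApproximableOperator_comp_eq q hlam (hlift V) ht

/-- If a short exact sequence `0 → Y → X →q Z → 0` uniformly `𝔉`-lifts (finite-rank
operators into `Z` lift to finite-rank operators into `X` with norm control `λ`), then
every approximable operator into `Z` lifts to an approximable operator into `X`. -/
theorem stmt15
    {Y X Z : Type} [NormedAddCommGroup Y] [NormedSpace ℝ Y] [CompleteSpace Y]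
    [NormedAddCommGroup X] [NormedSpace ℝ X] [CompleteSpace X]
    [NormedAddCommGroup Z] [NormedSpace ℝ Z] [CompleteSpace Z]
    (i : Y →L[ℝ] X) (q : X →L[ℝ] Z)
    (hi : Isometry i) (hq : Function.Surjective q)
    (hexact : LinearMap.ker (q : X →ₗ[ℝ] Z) = LinearMap.range (i : Y →ₗ[ℝ] X))
    (lam : ℝ) (hlam : 0 < lam)
    (hlift : ∀ (V : Type) [NormedAddCommGroup V] [NormedSpace ℝ V] [CompleteSpace V],
      ∀ t : V →L[ℝ] Z, IsFiniteRankOperator t →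
        ∃ T : V →L[ℝ] X, IsFiniteRankOperator T ∧ q.comp T = t ∧ ‖T‖ ≤ lam * ‖t‖) :
    ∀ (V : Type) [NormedAddCommGroup V] [NormedSpace ℝ V] [CompleteSpace V],
      ∀ t : V →L[ℝ] Z, IsApproximableOperator t →
        ∃ T : V →L[ℝ] X, IsApproximableOperator T ∧ q.comp T = t :=
  stmt15_general q lam hlam hlift
end

section
/- If Z is a Banach space with the bounded approximation property, then every compact operator K : V → Z is approximable, i.e. 𝔎(V,Z) = A(V,Z) for every Banach space V. -/
/-- A Banach space `Z` has the bounded approximation property if there is `C > 0` such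
that for every `ε > 0` and compact `K ⊆ Z` there is a finite-rank operator `T` on `Z`
with `‖T‖ ≤ C` and `‖T z - z‖ ≤ ε` on `K`. -/
def HasBAP (Z : Type*) [NormedAddCommGroup Z] [NormedSpace ℝ Z] : Prop :=
  ∃ C > (0:ℝ), ∀ ε > (0:ℝ), ∀ K : Set Z, IsCompact K →
    ∃ T : Z →L[ℝ] Z, IsFiniteRankOperator T ∧ ‖T‖ ≤ C ∧ ∀ z ∈ K, ‖T z - z‖ ≤ ε

/-!
A compact operator `K` maps the unit ball into a relatively compact set `S`. The
approximation property gives a finite-rank `T` with `T ≈ id` uniformly on `S`, hence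
`‖T ∘ K - K‖` is small. Conversely, finite-rank operators are compact and the compact operators
form a closed subspace when the codomain is complete.
-/

/-- The approximation property. -/
def HasAP (Z : Type*) [NormedAddCommGroup Z] [NormedSpace ℝ Z] : Prop :=
  ∀ ε > (0:ℝ), ∀ S : Set Z, IsCompact S →
    ∃ T : Z →L[ℝ] Z, IsFiniteRankOperator T ∧ ∀ z ∈ S, ‖T z - z‖ ≤ ε

theorem HasBAP.hasAP {Z : Type*} [NormedAddCommGroup Z] [NormedSpace ℝ Z] (h : HasBAP Z) :
    HasAP Z := by
  obtain ⟨_, _, hBAP⟩ := h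
  intro ε hε S hS
  obtain ⟨T, hT, -, hTS⟩ := hBAP ε hε S hS
  exact ⟨T, hT, hTS⟩

section

variable {U V Z : Type*} [NormedAddCommGroup U] [NormedSpace ℝ U]
  [NormedAddCommGroup V] [NormedSpace ℝ V] [NormedAddCommGroup Z] [NormedSpace ℝ Z]

theorem IsFiniteRankOperator.comp {T : V →L[ℝ] Z} (hT : IsFiniteRankOperator T)
    (K : U →L[ℝ] V) : IsFiniteRankOperator (T.comp K) := by
  have : FiniteDimensional ℝ (LinearMap.range (T : V →ₗ[ℝ] Z)) := hT
  exact Submodule.finiteDimensional_of_le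
    (LinearMap.range_comp_le_range (K : U →ₗ[ℝ] V) (T : V →ₗ[ℝ] Z))

/-- A finite-rank operator factors through its range, which is locally compact. -/
theorem IsFiniteRankOperator.isCompactOperator {F : V →L[ℝ] Z} (hF : IsFiniteRankOperator F) :
    IsCompactOperator F := by
  have : FiniteDimensional ℝ (LinearMap.range (F : V →ₗ[ℝ] Z)) := hF
  exact (isCompactOperator_of_locallyCompactSpace_dom
    (F.codRestrict _ (LinearMap.mem_range_self (F : V →ₗ[ℝ] Z)))).continuous_comp
    continuous_subtype_val

theorem IsApproximableOperator.isCompactOperator [CompleteSpace Z] {K : V →L[ℝ] Z}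
    (hK : IsApproximableOperator K) : IsCompactOperator K := by
  refine isClosed_setOfPred_isCompactOperator.closure_subset (Metric.mem_closure_iff.2 ?_)
  intro ε hε
  obtain ⟨F, hF, hKF⟩ := hK ε hε
  exact ⟨F, hF.isCompactOperator, by rwa [dist_eq_norm]⟩

theorem opNorm_comp_sub_le_of_forall_mem_image_closedBall {K : V →L[ℝ] Z} {T : Z →L[ℝ] Z}
    {ε : ℝ} (hε : 0 ≤ ε) (hT : ∀ z ∈ K '' Metric.closedBall 0 1, ‖T z - z‖ ≤ ε) :
    ‖T.comp K - K‖ ≤ ε :=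
  ContinuousLinearMap.opNorm_le_of_unit_norm hε fun v hv =>
    hT (K v) ⟨v, by simp [hv], rfl⟩

theorem IsCompactOperator.isApproximableOperator (hZ : HasAP Z) {K : V →L[ℝ] Z}
    (hK : IsCompactOperator K) : IsApproximableOperator K := by
  intro ε hε
  obtain ⟨T, hT, hTS⟩ := hZ (ε / 2) (half_pos hε) _
    (hK.isCompact_closure_image_closedBall (𝕜₁ := ℝ) 1)
  refine ⟨T.comp K, hT.comp K, ?_⟩
  have hclose : ‖T.comp K - K‖ ≤ ε / 2 :=
    opNorm_comp_sub_le_of_forall_mem_image_closedBall (half_pos hε).le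
      fun z hz => hTS z (subset_closure hz)
  rw [norm_sub_rev]
  linarith

end

/-- If `Z` has the bounded approximation property, then every compact operator
`K : V → Z` is approximable: `𝔎(V,Z) = A(V,Z)`. -/
theorem stmt16
    {Z : Type} [NormedAddCommGroup Z] [NormedSpace ℝ Z] [CompleteSpace Z]
    (hZ : HasBAP Z) :
    ∀ (V : Type) [NormedAddCommGroup V] [NormedSpace ℝ V] [CompleteSpace V],
      ∀ K : V →L[ℝ] Z, IsCompactOperator K ↔ IsApproximableOperator K :=
  fun _ _ _ _ _ => ⟨fun hK => hK.isApproximableOperator hZ.hasAP,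
    IsApproximableOperator.isCompactOperator⟩
end

section
/- If Y is a closed subspace of a Banach space X that is locally complemented (there is λ > 0 such that every finite-dimensional subspace E ⊆ X admits an operator T_E : E → Y with ‖T_E‖ ≤ λ and T_E fixing E ∩ Y), then there is a bounded linear operator s : Y* → X* with i* ∘ s = id_{Y*}, where i : Y → X is the inclusion; in particular every functional on Y extends to X linearly and boundedly in y*. -/
/-!
For a finite set `s ⊆ X`, extend the operator `T_s : span s → Y` given by local complementation to
a linear (not necessarily continuous) map `A_s : X → Y`. The bilinear forms `(g, x) ↦ g (A_s x)` are
bounded by `λ ‖g‖ ‖x‖` as soon as `x ∈ span s`, so along an ultrafilter finer than `atTop` on finite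
sets they converge pointwise, by compactness of closed balls of scalars. The limit is a bounded
bilinear form, i.e. an operator `Y* → X*`, and it extends each `g` because `A_s` fixes
`Y ∩ span s`.
-/

open Filter Topology

section UltrafilterLimit

variable {ι 𝕜 V W : Type*} [NontriviallyNormedField 𝕜] [ProperSpace 𝕜]
  [NormedAddCommGroup V] [NormedSpace 𝕜 V] [NormedAddCommGroup W] [NormedSpace 𝕜 W]

theorem Ultrafilter.exists_tendsto_of_eventually_norm_le (U : Ultrafilter ι) {f : ι → 𝕜}
    {C : ℝ} (hf : ∀ᶠ i in U, ‖f i‖ ≤ C) : ∃ c, ‖c‖ ≤ C ∧ Tendsto f U (𝓝 c) := by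
  obtain ⟨c, hc, hlim⟩ := (isCompact_closedBall (0 : 𝕜) C).ultrafilter_le_nhds' (U.map f)
    (Ultrafilter.mem_map.mpr (hf.mono fun i hi => by simpa using hi))
  exact ⟨c, by simpa using hc, hlim⟩

theorem Ultrafilter.exists_tendsto_of_bilinear (U : Ultrafilter ι)
    (B : ι → V →ₗ[𝕜] W →ₗ[𝕜] 𝕜) (C : ℝ)
    (hB : ∀ v w, ∀ᶠ i in U, ‖B i v w‖ ≤ C * ‖v‖ * ‖w‖) :
    ∃ S : V →L[𝕜] W →L[𝕜] 𝕜, ∀ v w, Tendsto (fun i => B i v w) U (𝓝 (S v w)) := by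
  choose F hFC hF using fun v w => U.exists_tendsto_of_eventually_norm_le (hB v w)
  have lim_eq {v w} {c : 𝕜} (h : Tendsto (fun i => B i v w) U (𝓝 c)) : F v w = c :=
    tendsto_nhds_unique (hF v w) h
  let S : V →ₗ[𝕜] W →ₗ[𝕜] 𝕜 := LinearMap.mk₂ 𝕜 F
    (fun v v' w => lim_eq <| by simpa using (hF v w).add (hF v' w))
    (fun a v w => lim_eq <| by simpa using (hF v w).const_mul a)
    (fun v w w' => lim_eq <| by simpa using (hF v w).add (hF v w'))
    (fun a v w => lim_eq <| by simpa using (hF v w).const_mul a)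
  exact ⟨S.mkContinuous₂ C hFC, hF⟩

end UltrafilterLimit

theorem Ultrafilter.eventually_mem_span {R M : Type*} [Semiring R] [AddCommMonoid M] [Module R M]
    {U : Ultrafilter (Finset M)} (hU : (U : Filter (Finset M)) ≤ atTop) (x : M) :
    ∀ᶠ s : Finset M in U, x ∈ Submodule.span R (s : Set M) :=
  hU <| (eventually_ge_atTop {x}).mono fun _ hs =>
    Submodule.subset_span (Finset.singleton_subset_iff.mp hs)

theorem stmt18_general
    {X : Type} [NormedAddCommGroup X] [NormedSpace ℝ X]
    (Y : Submodule ℝ X)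
    (lam : ℝ)
    (hloc : ∀ E : Submodule ℝ X, FiniteDimensional ℝ E →
      ∃ T : E →L[ℝ] Y, ‖T‖ ≤ lam ∧
        ∀ (x : X) (hxE : x ∈ E) (hxY : x ∈ Y), T ⟨x, hxE⟩ = ⟨x, hxY⟩) :
    ∃ s : StrongDual ℝ Y →L[ℝ] StrongDual ℝ X,
      ∀ (g : StrongDual ℝ Y), (s g).comp Y.subtypeL = g := by
  choose T hT hfix using fun s : Finset X => hloc (Submodule.span ℝ s) inferInstance
  choose A hA using fun s : Finset X =>
    LinearMap.exists_extend (T s : Submodule.span ℝ (s : Set X) →ₗ[ℝ] Y)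
  have hAT (s : Finset X) (x : X) (hx : x ∈ Submodule.span ℝ (s : Set X)) :
      A s x = T s ⟨x, hx⟩ :=
    LinearMap.congr_fun (hA s) ⟨x, hx⟩
  let U := Ultrafilter.of (atTop : Filter (Finset X))
  have mem_span := U.eventually_mem_span (R := ℝ) (Ultrafilter.of_le _)
  let B (s : Finset X) : StrongDual ℝ Y →ₗ[ℝ] X →ₗ[ℝ] ℝ :=
    (A s).dualMap ∘ₗ ContinuousLinearMap.coeLM ℝ
  obtain ⟨S, hS⟩ := U.exists_tendsto_of_bilinear (𝕜 := ℝ) (V := StrongDual ℝ Y) B lam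
    fun g x => by
      filter_upwards [mem_span x] with s hx
      calc ‖g (A s x)‖ ≤ ‖g‖ * (‖T s‖ * ‖x‖) := by
            rw [hAT s x hx]
            exact g.le_opNorm_of_le ((T s).le_opNorm _)
        _ ≤ ‖g‖ * (lam * ‖x‖) := by gcongr; exact hT s
        _ = lam * ‖g‖ * ‖x‖ := by ring
  refine ⟨S, fun g => ContinuousLinearMap.ext fun y => ?_⟩
  refine tendsto_nhds_unique (hS g y) (tendsto_const_nhds.congr' ?_)
  filter_upwards [mem_span y] with s hy
  change g y = g (A s y)
  rw [hAT s y hy, hfix s y hy y.2]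

/-- If a closed subspace `Y` of a Banach space `X` is locally complemented (there is
`λ > 0` such that every finite-dimensional subspace `E ⊆ X` admits `T_E : E → Y` with
`‖T_E‖ ≤ λ` fixing `E ∩ Y`), then the restriction map `i* : X* → Y*` admits a bounded
linear right inverse `s`: every functional on `Y` extends to `X` linearly and boundedly
in `y*`. -/
theorem stmt18
    {X : Type} [NormedAddCommGroup X] [NormedSpace ℝ X] [CompleteSpace X]
    (Y : Submodule ℝ X) (hYc : IsClosed (Y : Set X))
    (lam : ℝ) (hlam : 0 < lam)
    (hloc : ∀ E : Submodule ℝ X, FiniteDimensional ℝ E →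
      ∃ T : E →L[ℝ] Y, ‖T‖ ≤ lam ∧
        ∀ (x : X) (hxE : x ∈ E) (hxY : x ∈ Y), T ⟨x, hxE⟩ = ⟨x, hxY⟩) :
    ∃ s : StrongDual ℝ Y →L[ℝ] StrongDual ℝ X,
      ∀ (g : StrongDual ℝ Y), (s g).comp Y.subtypeL = g :=
  stmt18_general Y lam hloc
end
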